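/- Let 1 ≤ m ≤ n, let d_1,…,d_m, b_1,…,b_{n−1} be real numbers, and define F : R^{m+n−1} → R^{m+n−1} by F_i(θ) = d_i − Σ_{j=1}^n e^{α_i+β_j}/(1+e^{α_i+β_j}) for i = 1,…,m and F_{m+j}(θ) = b_j − Σ_{i=1}^m e^{α_i+β_j}/(1+e^{α_i+β_j}) for j = 1,…,n−1 (with β_n = 0). Then for all x, y ∈ R^{m+n−1}: max_{1≤i≤m+n−1} ‖F′_i(x) − F′_i(y)‖_∞ ≤ (n/2) ‖x − y‖_∞, where F′_i denotes the gradient vector of F_i. -/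

import Mathlib

/-!
Each entry of `F'` is a sum of at most `n` terms `-f'(α_i + β_j)`, where `f' = pf'` is the
logistic density. Since `|pf''| = |e^a (1 - e^a) / (1 + e^a)^3| ≤ 1/4` and each argument
`α_i + β_j` moves by at most `2 ‖x - y‖_∞`, every term moves by at most `‖x - y‖_∞ / 2`.
-/

open MeasureTheory ProbabilityTheory Filter Matrix Topology
open scoped ENNReal NNReal

noncomputable section

namespace Affiliation

/-- Index type for the parameter vector `θ ∈ ℝ^{m+n-1}`:
`Sum.inl i` corresponds to the coordinate `α_i` (`1 ≤ i ≤ m`),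
`Sum.inr j` to the coordinate `β_j` (`1 ≤ j ≤ n-1`). -/
abbrev Idx (m n : ℕ) := Fin m ⊕ Fin (n - 1)

/-- The logistic function `e^x / (1 + e^x)`. -/
def pf (x : ℝ) : ℝ := Real.exp x / (1 + Real.exp x)

/-- `e^x / (1 + e^x)^2`, the derivative of the logistic function. -/
def pf' (x : ℝ) : ℝ := Real.exp x / (1 + Real.exp x) ^ 2

variable {m n : ℕ} {Ω : Type*}

/-- `α_i` read off from `θ`. -/
def alphaF (θ : Idx m n → ℝ) (i : Fin m) : ℝ := θ (Sum.inl i)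

/-- `β_j` read off from `θ`, with the convention `β_n = 0`. -/
def betaF (θ : Idx m n → ℝ) (j : Fin n) : ℝ :=
  if h : (j : ℕ) < n - 1 then θ (Sum.inr ⟨j, h⟩) else 0

/-- The degree `d_i = Σ_j x_{ij}` of event `i`. -/
def degVec (X : Fin m → Fin n → Ω → ℝ) (ω : Ω) (i : Fin m) : ℝ := ∑ j, X i j ω

/-- The degree `b_j = Σ_i x_{ij}` of actor `j`. -/
def bVec (X : Fin m → Fin n → Ω → ℝ) (ω : Ω) (j : Fin n) : ℝ := ∑ i, X i j ω

/-- The vector `g = (d_1, …, d_m, b_1, …, b_{n-1})`. -/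
def gvec (X : Fin m → Fin n → Ω → ℝ) (ω : Ω) : Idx m n → ℝ :=
  Sum.elim (degVec X ω) (fun j => bVec X ω (Fin.castLE (Nat.sub_le n 1) j))

/-- The affiliation network model: the `x_{ij}` are mutually independent `{0,1}`-valued
random variables with `P(x_{ij} = 1) = e^{α_i+β_j}/(1+e^{α_i+β_j})` (convention `β_n = 0`). -/
structure IsAffilModel [MeasurableSpace Ω] (P : Measure Ω)
    (θ : Idx m n → ℝ) (X : Fin m → Fin n → Ω → ℝ) : Prop where
  isProb : IsProbabilityMeasure P
  meas : ∀ i j, Measurable (X i j)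
  binary : ∀ i j ω, X i j ω = 0 ∨ X i j ω = 1
  indep : iIndepFun
    (fun p : Fin m × Fin n => X p.1 p.2) P
  prob_one : ∀ i j, P {ω | X i j ω = 1} = ENNReal.ofReal (pf (alphaF θ i + betaF θ j))

/-- The expectation `E g`. -/
def Eg [MeasurableSpace Ω] (P : Measure Ω) (X : Fin m → Fin n → Ω → ℝ) (k : Idx m n) : ℝ :=
  ∫ ω, gvec X ω k ∂P

/-- The likelihood equations: `θ` is an MLE for the observed degrees `(d, b)`. -/
def IsMLE (d : Fin m → ℝ) (b : Fin (n - 1) → ℝ) (θ : Idx m n → ℝ) : Prop :=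
  (∀ i, d i = ∑ j : Fin n, pf (alphaF θ i + betaF θ j)) ∧
  (∀ j : Fin (n - 1), b j = ∑ i : Fin m, pf (alphaF θ i + θ (Sum.inr j)))

/-- `θ` is an MLE for the degrees observed at the sample point `ω`. -/
def IsMLEat (X : Fin m → Fin n → Ω → ℝ) (ω : Ω) (θ : Idx m n → ℝ) : Prop :=
  IsMLE (degVec X ω) (fun j => bVec X ω (Fin.castLE (Nat.sub_le n 1) j)) θ

/-- The Fisher information matrix `V(θ)`. -/
def fisher (θ : Idx m n → ℝ) : Matrix (Idx m n) (Idx m n) ℝ :=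
  fun k l => match k, l with
  | Sum.inl i, Sum.inl i' => if i = i' then ∑ j : Fin n, pf' (alphaF θ i + betaF θ j) else 0
  | Sum.inl i, Sum.inr j => pf' (alphaF θ i + θ (Sum.inr j))
  | Sum.inr j, Sum.inl i => pf' (alphaF θ i + θ (Sum.inr j))
  | Sum.inr j, Sum.inr j' => if j = j' then ∑ i : Fin m, pf' (alphaF θ i + θ (Sum.inr j)) else 0

/-- `v_{i,m+n} := v_{ii} - Σ_{j ≠ i} v_{ij}`. -/
def vRem (V : Matrix (Idx m n) (Idx m n) ℝ) (i : Idx m n) : ℝ :=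
  V i i - ∑ j ∈ Finset.univ.erase i, V i j

/-- `v_{m+n,m+n} := Σ_{i=1}^{m+n-1} v_{i,m+n}`. -/
def vnnOf (V : Matrix (Idx m n) (Idx m n) ℝ) : ℝ := ∑ i, vRem V i

/-- `v_{m+n,m+n}` for the Fisher information matrix,
`Σ_{i=1}^m (v_{ii} - Σ_{j=m+1}^{m+n-1} v_{ij})`. -/
def vnnFisher (θ : Idx m n → ℝ) : ℝ :=
  ∑ i : Fin m,
    (fisher θ (Sum.inl i) (Sum.inl i) - ∑ j : Fin (n - 1), fisher θ (Sum.inl i) (Sum.inr j))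

/-- The approximating matrix `S` built from `V`, with `1/v_{m+n,m+n}` replaced by `1/c`. -/
def approxSWith (V : Matrix (Idx m n) (Idx m n) ℝ) (c : ℝ) : Matrix (Idx m n) (Idx m n) ℝ :=
  fun k l => match k, l with
  | Sum.inl i, Sum.inl i' => (if i = i' then (V (Sum.inl i) (Sum.inl i))⁻¹ else 0) + c⁻¹
  | Sum.inr j, Sum.inr j' => (if j = j' then (V (Sum.inr j) (Sum.inr j))⁻¹ else 0) + c⁻¹
  | _, _ => -c⁻¹

/-- The approximating matrix `S` built from a matrix `V` in the class `L_{m,n}(q,Q)`. -/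
def approxS (V : Matrix (Idx m n) (Idx m n) ℝ) : Matrix (Idx m n) (Idx m n) ℝ :=
  approxSWith V (vnnOf V)

/-- The approximating matrix `S` built from the Fisher information matrix `V(θ)`. -/
def fisherS (θ : Idx m n → ℝ) : Matrix (Idx m n) (Idx m n) ℝ :=
  approxSWith (fisher θ) (vnnFisher θ)

/-- Membership in the matrix class `L_{m,n}(q,Q)`. -/
structure MemL (m n : ℕ) (q Q : ℝ) (V : Matrix (Idx m n) (Idx m n) ℝ) : Prop where
  symm : V.IsSymm
  nonneg : ∀ i j, 0 ≤ V i j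
  zero_ll : ∀ a b : Fin m, a ≠ b → V (Sum.inl a) (Sum.inl b) = 0
  zero_rr : ∀ a b : Fin (n - 1), a ≠ b → V (Sum.inr a) (Sum.inr b) = 0
  cross_lb : ∀ (a : Fin m) (b : Fin (n - 1)), q ≤ V (Sum.inl a) (Sum.inr b)
  cross_ub : ∀ (a : Fin m) (b : Fin (n - 1)), V (Sum.inl a) (Sum.inr b) ≤ Q
  diag_l_lb : ∀ a : Fin m,
    q ≤ V (Sum.inl a) (Sum.inl a) - ∑ b : Fin (n - 1), V (Sum.inl a) (Sum.inr b)
  diag_l_ub : ∀ a : Fin m,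
    V (Sum.inl a) (Sum.inl a) - ∑ b : Fin (n - 1), V (Sum.inl a) (Sum.inr b) ≤ Q
  diag_r : ∀ b : Fin (n - 1), V (Sum.inr b) (Sum.inr b) = ∑ a : Fin m, V (Sum.inl a) (Sum.inr b)

/-- `‖A‖ := max_{i,j} |a_{ij}|`. -/
def matNorm (A : Matrix (Idx m n) (Idx m n) ℝ) : ℝ :=
  ‖fun p : Idx m n × Idx m n => A p.1 p.2‖

/-- The index (0-based) `i` of `θ ∈ ℝ^{m+n-1}` as an element of `Idx m n`, if it exists. -/
def coordIdx (m n i : ℕ) : Option (Idx m n) :=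
  if h : i < m then some (Sum.inl ⟨i, h⟩)
  else if h' : i - m < n - 1 then some (Sum.inr ⟨i - m, h'⟩)
  else none

/-- The `i`-th coordinate (0-based) of a vector `x ∈ ℝ^{m+n-1}` (junk value `0` out of range). -/
def coordVal (x : Idx m n → ℝ) (i : ℕ) : ℝ := ((coordIdx m n i).map x).getD 0

/-- The upper-left `k × k` block of a matrix indexed by `Idx m n`. -/
def blockK (A : Matrix (Idx m n) (Idx m n) ℝ) (k : ℕ) : Matrix (Fin k) (Fin k) ℝ :=
  fun i j => match coordIdx m n (i : ℕ), coordIdx m n (j : ℕ) with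
    | some a, some b => A a b
    | _, _ => 0

/-- The inverse square root `A^{-1/2}` of a positive semidefinite matrix
(junk value `0` if `A` is not positive semidefinite). -/
def invSqrt {k : ℕ} (A : Matrix (Fin k) (Fin k) ℝ) : Matrix (Fin k) (Fin k) ℝ :=
  letI := Classical.propDecidable A.PosSemidef
  if h : A.PosSemidef then
    (h.1.eigenvectorUnitary.1 * Matrix.diagonal (RCLike.ofReal ∘ Real.sqrt ∘ h.1.eigenvalues) *
      (star h.1.eigenvectorUnitary : Matrix (Fin k) (Fin k) ℝ))⁻¹ else 0

/-- The standard Gaussian distribution `N(0, I_k)` on `ℝ^k`. -/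
def stdGaussian (k : ℕ) : Measure (Fin k → ℝ) :=
  Measure.pi fun _ => gaussianReal 0 1

/-- The function `F(θ)` whose components are
`F_i(θ) = d_i - Σ_k f(α_i + β_k)` and `F_{m+j}(θ) = b_j - Σ_k f(α_k + β_j)`. -/
def Fvec (f : ℝ → ℝ) (d : Fin m → ℝ) (b : Fin (n - 1) → ℝ) (θ : Idx m n → ℝ) : Idx m n → ℝ :=
  fun k => match k with
  | Sum.inl i => d i - ∑ j : Fin n, f (alphaF θ i + betaF θ j)
  | Sum.inr j => b j - ∑ i : Fin m, f (alphaF θ i + θ (Sum.inr j))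

/-- The Jacobian matrix `F'(θ)` of `Fvec f d b`. -/
def jacF (f : ℝ → ℝ) (θ : Idx m n → ℝ) : Matrix (Idx m n) (Idx m n) ℝ :=
  fun k l => match k, l with
  | Sum.inl i, Sum.inl i' =>
      if i = i' then -∑ j : Fin n, deriv f (alphaF θ i + betaF θ j) else 0
  | Sum.inl i, Sum.inr j => -deriv f (alphaF θ i + θ (Sum.inr j))
  | Sum.inr j, Sum.inl i => -deriv f (alphaF θ i + θ (Sum.inr j))
  | Sum.inr j, Sum.inr j' =>
      if j = j' then -∑ i : Fin m, deriv f (alphaF θ i + θ (Sum.inr j)) else 0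

/-- The Newton iterates `θ^{(k+1)} = θ^{(k)} - [F'(θ^{(k)})]⁻¹ F(θ^{(k)})`. -/
def newton (f : ℝ → ℝ) (d : Fin m → ℝ) (b : Fin (n - 1) → ℝ) (θ0 : Idx m n → ℝ) :
    ℕ → Idx m n → ℝ
  | 0 => θ0
  | k + 1 =>
    newton f d b θ0 k - (jacF f (newton f d b θ0 k))⁻¹.mulVec (Fvec f d b (newton f d b θ0 k))

lemma hasDerivAt_pf (a : ℝ) : HasDerivAt pf (pf' a) a := by
  have h1 : 1 + Real.exp a ≠ 0 := by positivity
  refine ((Real.hasDerivAt_exp a).div ((Real.hasDerivAt_exp a).const_add 1) h1).congr_deriv ?_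
  simp only [pf']
  field_simp
  ring

lemma deriv_pf : deriv pf = pf' := funext fun a => (hasDerivAt_pf a).deriv

lemma hasDerivAt_pf' (a : ℝ) :
    HasDerivAt pf' (Real.exp a * (1 - Real.exp a) / (1 + Real.exp a) ^ 3) a := by
  have h1 : 1 + Real.exp a ≠ 0 := by positivity
  refine ((Real.hasDerivAt_exp a).div
    (((Real.hasDerivAt_exp a).const_add 1).pow 2) (pow_ne_zero 2 h1)).congr_deriv ?_
  simp only [Pi.pow_apply]
  field_simp
  ring

lemma abs_exp_mul_one_sub_exp_div_le (a : ℝ) :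
    |Real.exp a * (1 - Real.exp a) / (1 + Real.exp a) ^ 3| ≤ 1 / 4 := by
  set e := Real.exp a
  have he : 0 < e := Real.exp_pos a
  have hden : 0 < (1 + e) ^ 3 := by positivity
  have habs : |1 - e| ≤ 1 + e := abs_le.2 ⟨by linarith, by linarith⟩
  rw [abs_div, abs_of_pos hden, div_le_iff₀ hden, abs_mul, abs_of_pos he]
  calc e * |1 - e| ≤ e * (1 + e) := mul_le_mul_of_nonneg_left habs he.le
    _ ≤ 1 / 4 * (1 + e) ^ 3 := by nlinarith [sq_nonneg (1 - e)]

lemma lipschitzWith_pf' : LipschitzWith (1 / 4) pf' := by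
  refine lipschitzWith_of_nnnorm_deriv_le (fun a => (hasDerivAt_pf' a).differentiableAt)
    fun a => ?_
  rw [← NNReal.coe_le_coe, coe_nnnorm, (hasDerivAt_pf' a).deriv, Real.norm_eq_abs]
  simpa using abs_exp_mul_one_sub_exp_div_le a

lemma _root_.LipschitzWith.abs_comp_add_sub_comp_add_le {g : ℝ → ℝ} {K : ℝ≥0}
    (hg : LipschitzWith K g) {a b c d r : ℝ} (hac : |a - c| ≤ r) (hbd : |b - d| ≤ r) :
    |g (a + b) - g (c + d)| ≤ 2 * K * r := by
  have hsum : |a + b - (c + d)| ≤ 2 * r := by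
    rw [add_sub_add_comm, two_mul]
    exact (abs_add_le _ _).trans (add_le_add hac hbd)
  calc |g (a + b) - g (c + d)| ≤ K * |a + b - (c + d)| := by
        simpa only [Real.dist_eq] using hg.dist_le_mul (a + b) (c + d)
    _ ≤ K * (2 * r) := by gcongr
    _ = 2 * K * r := by ring

lemma abs_sum_sub_sum_le {ι : Type*} (s : Finset ι) {u v : ι → ℝ} {r : ℝ}
    (h : ∀ i ∈ s, |u i - v i| ≤ r) : |∑ i ∈ s, u i - ∑ i ∈ s, v i| ≤ s.card * r := by
  rw [← Finset.sum_sub_distrib]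
  exact (Finset.abs_sum_le_sum_abs _ _).trans (by simpa using Finset.sum_le_card_nsmul s _ r h)

section Coordinates

variable {m n : ℕ} (x y : Idx m n → ℝ)

lemma abs_apply_sub_le (k : Idx m n) : |x k - y k| ≤ ‖x - y‖ := by
  simpa only [Real.norm_eq_abs, Pi.sub_apply] using norm_le_pi_norm (x - y) k

lemma abs_alphaF_sub_le (i : Fin m) : |alphaF x i - alphaF y i| ≤ ‖x - y‖ :=
  abs_apply_sub_le x y _

lemma abs_betaF_sub_le (j : Fin n) : |betaF x j - betaF y j| ≤ ‖x - y‖ := by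
  unfold betaF
  split
  · exact abs_apply_sub_le x y _
  · simp

end Coordinates

section Jacobian

variable {m n : ℕ} {f : ℝ → ℝ} {K : ℝ≥0}

lemma abs_jacF_sub_le (hf : LipschitzWith K (deriv f)) (hmn : m ≤ n) (x y : Idx m n → ℝ)
    (k l : Idx m n) : |jacF f x k l - jacF f y k l| ≤ 2 * K * n * ‖x - y‖ := by
  have hα := abs_alphaF_sub_le x y
  have hθ := abs_apply_sub_le x y
  have hbound : ∀ {c : ℕ}, c ≤ n → c * (2 * K * ‖x - y‖) ≤ 2 * K * n * ‖x - y‖ := fun hc => by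
    rw [mul_comm, mul_right_comm]; gcongr
  have hcross : ∀ i j,
      |-deriv f (alphaF x i + x (Sum.inr j)) - -deriv f (alphaF y i + y (Sum.inr j))| ≤
        2 * K * n * ‖x - y‖ := fun i j => by
    have hn : 1 ≤ n := by have := j.pos; omega
    rw [neg_sub_neg, abs_sub_comm]
    exact (hf.abs_comp_add_sub_comp_add_le (hα i) (hθ _)).trans (by simpa using hbound hn)
  rcases k with i | j <;> rcases l with i' | j' <;> simp only [jacF]
  · split_ifs
    · rw [neg_sub_neg, abs_sub_comm]
      refine (abs_sum_sub_sum_le Finset.univ fun j _ => ?_).trans (by simpa using hbound le_rfl)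
      exact hf.abs_comp_add_sub_comp_add_le (hα i) (abs_betaF_sub_le x y j)
    · rw [sub_self, abs_zero]; positivity
  · exact hcross i j'
  · exact hcross i' j
  · split_ifs
    · rw [neg_sub_neg, abs_sub_comm]
      refine (abs_sum_sub_sum_le Finset.univ fun i _ => ?_).trans (by simpa using hbound hmn)
      exact hf.abs_comp_add_sub_comp_add_le (hα i) (hθ _)
    · rw [sub_self, abs_zero]; positivity

lemma norm_jacF_sub_le (hf : LipschitzWith K (deriv f)) (hmn : m ≤ n) (x y : Idx m n → ℝ)
    (k : Idx m n) : ‖jacF f x k - jacF f y k‖ ≤ 2 * K * n * ‖x - y‖ :=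
  (pi_norm_le_iff_of_nonneg (by positivity)).2 fun l => by
    simpa only [Pi.sub_apply, Real.norm_eq_abs] using abs_jacF_sub_le hf hmn x y k l

end Jacobian

theorem jacobian_row_lipschitz_general (m n : ℕ) (hmn : m ≤ n) (x y : Idx m n → ℝ) :
    ∀ i : Idx m n, ‖jacF pf x i - jacF pf y i‖ ≤ ((n : ℝ) / 2) * ‖x - y‖ := by
  intro i
  have h := norm_jacF_sub_le (deriv_pf ▸ lipschitzWith_pf') hmn x y i
  convert h using 1
  push_cast
  ring

/-- row-wise Lipschitz bound
`max_i ‖F'_i(x) - F'_i(y)‖_∞ ≤ (n/2) ‖x - y‖_∞` for the Jacobian of the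
likelihood-equation function of the affiliation model. -/
theorem jacobian_row_lipschitz (m n : ℕ) (hm : 1 ≤ m) (hmn : m ≤ n)
    (d : Fin m → ℝ) (b : Fin (n - 1) → ℝ) (x y : Idx m n → ℝ) :
    ∀ i : Idx m n, ‖jacF pf x i - jacF pf y i‖ ≤ ((n : ℝ) / 2) * ‖x - y‖ :=
  jacobian_row_lipschitz_general m n hmn x y

end Affiliation
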